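/- For every j ≥ 0, the composition g_j∘Z satisfies, in ℝ[[v]]: αβ·(1−v³)·(g_j∘Z) = v^{j+1}·(α + αv² + vβ)·(vα+β). -/

import Mathlib

open PowerSeries Filter

noncomputable section

/-- Composition `h ∘ Z` of formal power series; this is the usual composition whenever
`Z` has zero constant term (then for each `n` only finitely many terms contribute). -/
def psComp (h Z : PowerSeries ℝ) : PowerSeries ℝ :=
  PowerSeries.mk fun n => ∑' k : ℕ, (PowerSeries.coeff k h) * (PowerSeries.coeff n (Z ^ k))

/-- The substitution series `Z = v · ((α+βv)(β+αv))⁻¹ ∈ ℝ[[v]]`; the inverse exists since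
the constant term `αβ` is nonzero, and `Z` has zero constant term. -/
def Zsub (α β : ℝ) : PowerSeries ℝ :=
  PowerSeries.X * (((PowerSeries.C α) + (PowerSeries.C β) * PowerSeries.X) *
    ((PowerSeries.C β) + (PowerSeries.C α) * PowerSeries.X))⁻¹

/-!
Substituting `z = Z(v)` clears the denominators of the recurrences: since
`Z · (α + βv)(β + αv) = v`, multiplying a substituted equation
`u_N = αβ z (u_{N-1} + u_{N+1}) + (α² + β²) z u_N` by that denominator and cancelling `αβ`
leaves `(1 + v²) u_N = v (u_{N-1} + u_{N+1})`, whose only solutions are `u_N = v^N u_0`.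
Hence `g_j∘Z = v^j (g_0∘Z)` and `f_{N+1}∘Z = v^N (f_1∘Z)`, and the four boundary equations
become a linear system over `ℝ[[v]]` that can be solved for `g_0∘Z`.
-/

namespace PowerSeries

variable {R : Type*} [CommRing R]

/-- Writing `D N = H (N+1) - X * H N`, the recurrence says `D N = X * D (N+1)`, so every
`D N` is divisible by all powers of `X`, hence vanishes. -/
theorem eq_X_pow_mul_of_recurrence {H : ℕ → R⟦X⟧}
    (hH : ∀ N, (1 + X ^ 2) * H (N + 1) = X * (H N + H (N + 2))) (N : ℕ) :
    H N = X ^ N * H 0 := by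
  have hD : ∀ N, H (N + 1) - X * H N = X * (H (N + 2) - X * H (N + 1)) :=
    fun N => by linear_combination hH N
  have hdvd : ∀ k N, X ^ k ∣ H (N + 1) - X * H N := by
    intro k
    induction k with
    | zero => simp
    | succ k ih => intro N; rw [hD, pow_succ']; exact mul_dvd_mul_left X (ih (N + 1))
  have hstep : ∀ N, H (N + 1) = X * H N := fun N =>
    sub_eq_zero.1 <| ext fun n => X_pow_dvd_iff.1 (hdvd (n + 1) N) n n.lt_succ_self
  induction N with
  | zero => simp
  | succ N ih => rw [hstep, ih, pow_succ', mul_assoc]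

end PowerSeries

theorem psComp_eq_subst {Z : ℝ⟦X⟧} (hZ : constantCoeff Z = 0) (h : ℝ⟦X⟧) :
    psComp h Z = h.subst Z := by
  ext n
  rw [psComp, coeff_mk, coeff_subst' (HasSubst.of_constantCoeff_zero' hZ)]
  exact tsum_eq_finsum (coeff_subst_finite' (HasSubst.of_constantCoeff_zero' hZ) h n)

theorem constantCoeff_Zsub (α β : ℝ) : constantCoeff (Zsub α β) = 0 := by
  simp [Zsub]

def zDenom (α β : ℝ) : ℝ⟦X⟧ := (C α + C β * X) * (C β + C α * X)

def substZ (α β : ℝ) : ℝ⟦X⟧ →ₐ[ℝ] ℝ⟦X⟧ :=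
  substAlgHom (HasSubst.of_constantCoeff_zero' (constantCoeff_Zsub α β))

section Zsub

variable {α β : ℝ}

theorem Zsub_mul_zDenom (hα : α ≠ 0) (hβ : β ≠ 0) : Zsub α β * zDenom α β = X := by
  rw [Zsub, zDenom, mul_assoc, PowerSeries.inv_mul_cancel _ (by simp [hα, hβ]), mul_one]

theorem psComp_Zsub (h : ℝ⟦X⟧) : psComp h (Zsub α β) = substZ α β h := by
  rw [psComp_eq_subst (constantCoeff_Zsub α β), substZ, coe_substAlgHom]

theorem substZ_X : substZ α β X = Zsub α β := substAlgHom_X _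

theorem substZ_C (a : ℝ) : substZ α β (C a) = C a := (substZ α β).commutes a

theorem substZ_C_mul_X_mul (hα : α ≠ 0) (hβ : β ≠ 0) (a : ℝ) (h : ℝ⟦X⟧) :
    zDenom α β * substZ α β (C a * X * h) = C a * X * substZ α β h := by
  rw [map_mul, map_mul, substZ_C, substZ_X]
  linear_combination (C a * substZ α β h) * Zsub_mul_zDenom hα hβ

theorem substZ_eq_X_pow_mul_of_recurrence (hα : α ≠ 0) (hβ : β ≠ 0) {u : ℕ → ℝ⟦X⟧}
    (hu : ∀ N, u (N + 1) = C (α * β) * X * u N + C (α * β) * X * u (N + 2)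
        + C (α ^ 2 + β ^ 2) * X * u (N + 1)) (N : ℕ) :
    substZ α β (u N) = X ^ N * substZ α β (u 0) := by
  refine eq_X_pow_mul_of_recurrence (H := (substZ α β <| u ·)) (fun N => ?_) N
  have h := congrArg (zDenom α β * substZ α β ·) (hu N)
  simp only [map_add (substZ α β), mul_add, substZ_C_mul_X_mul hα hβ] at h
  simp only [zDenom, map_mul, map_add, map_pow] at h
  refine mul_left_cancel₀ (show C α * C β ≠ 0 by simp [hα, hβ]) ?_
  linear_combination h

theorem substZ_boundary_solution (hα : α ≠ 0) (hβ : β ≠ 0) {f₀ f₁ f₂ g₀ g₁ q : ℝ⟦X⟧}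
    (hf₁ : f₁ = C (α * β) * X * f₀ + C (α * β) * X * f₂ + C (α ^ 2 + β ^ 2) * X * f₁
        + C (β ^ 2) * X * q)
    (hf₀ : f₀ = 1 + C (α * β) * X * f₁ + C (α ^ 2 + β ^ 2) * X * f₀ + C (α * β) * X * q)
    (hq : q = C (α * β) * X * g₀ + C (α ^ 2) * X * q)
    (hg₀ : g₀ = C (α * β) * X * f₀ + C (α * β) * X * g₁ + C (α * β) * X * q
        + C (α ^ 2 + β ^ 2) * X * g₀)
    (hf₂ : substZ α β f₂ = X * substZ α β f₁) (hg₁ : substZ α β g₁ = X * substZ α β g₀) :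
    C (α * β) * (1 - X ^ 3) * substZ α β g₀ =
      X * (C α + C α * X ^ 2 + X * C β) * (X * C α + C β) := by
  have clearDenom {y z : ℝ⟦X⟧} (h : y = z) :
      zDenom α β * substZ α β y = zDenom α β * substZ α β z := h ▸ rfl
  have Ef₁ := clearDenom hf₁
  have Ef₀ := clearDenom hf₀
  have Eq := clearDenom hq
  have Eg₀ := clearDenom hg₀
  simp only [map_add (substZ α β), map_one, mul_add, mul_one, substZ_C_mul_X_mul hα hβ]
    at Ef₁ Ef₀ Eq Eg₀
  simp only [zDenom, map_mul, map_add, map_pow] at Ef₁ Ef₀ Eq Eg₀ ⊢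
  set F₀ := substZ α β f₀
  set F₁ := substZ α β f₁
  set G₀ := substZ α β g₀
  set Q := substZ α β q
  have hA : C α ≠ 0 := by simpa
  have hB : C β ≠ 0 := by simpa
  have hAB : C α + C β * X ≠ 0 := fun h => hα (by simpa using congrArg constantCoeff h)
  have hG₀ : G₀ = X * (F₀ + Q) := by
    refine mul_left_cancel₀ (mul_ne_zero hA hB) ?_
    linear_combination Eg₀ + C α * C β * X * hg₁
  have hQ : (C α + C β * X) * Q = C α * X ^ 2 * F₀ := by
    refine mul_left_cancel₀ hB ?_
    linear_combination Eq + C α * C β * X * hG₀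
  have hF₁ : C α * F₁ = C α * X * F₀ + C β * X * Q := by
    refine mul_left_cancel₀ hB ?_
    linear_combination Ef₁ + C α * C β * X * hf₂
  have hF₀ : C α * C β * (1 - X ^ 3) * F₀ = (C α + C β * X) * (C β + C α * X) := by
    refine mul_left_cancel₀ (mul_ne_zero hA hAB) ?_
    linear_combination C α * (C α + C β * X) * Ef₀ + C α * C β * X * (C α + C β * X) * hF₁
      + C α * C β * X * (C α + C β * X) * hQ
  refine mul_left_cancel₀ hAB ?_
  linear_combination (C α + C β * X) * C α * C β * (1 - X ^ 3) * hG₀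
    + C α * C β * X * (1 - X ^ 3) * hQ + X * (C α + C β * X + C α * X ^ 2) * hF₀

end Zsub

theorem twoStep_gj_substituted_general
    (α β : ℝ) (hα0 : 0 < α) (hα1 : α < 1) (hβ : β = 1 - α)
    (f g : ℕ → PowerSeries ℝ) (fQ : PowerSeries ℝ)
    (hf : ∀ N : ℕ, f (N + 2) =
      C (α * β) * X * f (N + 1) + C (α * β) * X * f (N + 3)
        + C (α ^ 2 + β ^ 2) * X * f (N + 2))
    (hf1 : f 1 = C (α * β) * X * f 0 + C (α * β) * X * f 2
        + C (α ^ 2 + β ^ 2) * X * f 1 + C (β ^ 2) * X * fQ)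
    (hf0 : f 0 = 1 + C (α * β) * X * f 1 + C (α ^ 2 + β ^ 2) * X * f 0
        + C (α * β) * X * fQ)
    (hfQ : fQ = C (α * β) * X * g 0 + C (α ^ 2) * X * fQ)
    (hg : ∀ N : ℕ, g (N + 1) = C (α * β) * X * g N + C (α * β) * X * g (N + 2)
        + C (α ^ 2 + β ^ 2) * X * g (N + 1))
    (hg0 : g 0 = C (α * β) * X * f 0 + C (α * β) * X * g 1
        + C (α * β) * X * fQ + C (α ^ 2 + β ^ 2) * X * g 0) :
    ∀ j : ℕ, C (α * β) * (1 - X ^ 3) * psComp (g j) (Zsub α β) =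
      X ^ (j + 1) * (C α + C α * X ^ 2 + X * C β) * (X * C α + C β) := by
  have hα : α ≠ 0 := hα0.ne'
  have hβ0 : β ≠ 0 := by rw [hβ]; linarith
  have hG := substZ_eq_X_pow_mul_of_recurrence hα hβ0 hg
  have hF := substZ_eq_X_pow_mul_of_recurrence hα hβ0 (u := (f <| · + 1)) hf
  have hg₀ := substZ_boundary_solution hα hβ0 hf1 hf0 hfQ hg0
    (by simpa using hF 1) (by simpa using hG 1)
  intro j
  rw [psComp_Zsub, hG j]
  linear_combination X ^ j * hg₀

/-- For every `j ≥ 0`: `αβ(1-v³)·(g_j∘Z) = v^{j+1}(α+αv²+vβ)(vα+β)`. -/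
theorem twoStep_gj_substituted
    (α β : ℝ) (hα0 : 0 < α) (hα1 : α < 1) (hβ : β = 1 - α)
    (f g : ℕ → PowerSeries ℝ) (fQ : PowerSeries ℝ)
    (hf : ∀ N : ℕ, f (N + 2) =
      C (α * β) * X * f (N + 1) + C (α * β) * X * f (N + 3)
        + C (α ^ 2 + β ^ 2) * X * f (N + 2))
    (hf1 : f 1 = C (α * β) * X * f 0 + C (α * β) * X * f 2
        + C (α ^ 2 + β ^ 2) * X * f 1 + C (β ^ 2) * X * fQ)
    (hf0 : f 0 = 1 + C (α * β) * X * f 1 + C (α ^ 2 + β ^ 2) * X * f 0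
        + C (α * β) * X * fQ)
    (hfQ : fQ = C (α * β) * X * g 0 + C (α ^ 2) * X * fQ)
    (hg : ∀ N : ℕ, g (N + 1) = C (α * β) * X * g N + C (α * β) * X * g (N + 2)
        + C (α ^ 2 + β ^ 2) * X * g (N + 1))
    (hg0 : g 0 = C (α * β) * X * f 0 + C (α * β) * X * g 1
        + C (α * β) * X * fQ + C (α ^ 2 + β ^ 2) * X * g 0)
    (hsupp : ∀ m N : ℕ, m < N → coeff m (f N) = 0 ∧ coeff m (g N) = 0) :
    ∀ j : ℕ, C (α * β) * (1 - X ^ 3) * psComp (g j) (Zsub α β) =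
      X ^ (j + 1) * (C α + C α * X ^ 2 + X * C β) * (X * C α + C β) :=
  twoStep_gj_substituted_general α β hα0 hα1 hβ f g fQ hf hf1 hf0 hfQ hg hg0
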